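/- For every positive C-RASP program P with L(P) ≠ ∅, there exists a string w ∈ L(P) of length at most exponential in the size of P. Moreover this bound is tight: for each n ≥ 1, the program Pₙ := (#[Q_a] = n) over the single-letter alphabet {a}, with n encoded in binary (so |Pₙ| = O(log n)), defines the singleton {aⁿ}, whose unique string has length exponential in |Pₙ|. -/

import Mathlib

inductive CmpOp : Type
  | lt | le | eq | ge | gt

def CmpOp.holds : CmpOp → ℤ → ℤ → Bool
  | .lt, x, y => decide (x < y)
  | .le, x, y => decide (x ≤ y)
  | .eq, x, y => decide (x = y)
  | .ge, x, y => decide (y ≤ x)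
  | .gt, x, y => decide (y < x)

mutual
inductive CForm (α : Type) : Type
  | sym : α → CForm α
  | not : CForm α → CForm α
  | and : CForm α → CForm α → CForm α
  | prev : CForm α → CForm α
  | hist : CForm α → CForm α
  | cmp : CTerm α → CmpOp → ℤ → CForm α
inductive CTerm (α : Type) : Type
  | const : ℤ → CTerm α
  | cnt : CForm α → CTerm α
  | add : CTerm α → CTerm α → CTerm α
  | smul : ℤ → CTerm α → CTerm α
end

mutual
def CForm.eval {α : Type} [DecidableEq α] : CForm α → List α → ℕ → Bool
  | .sym a, w, i => w[i - 1]? == some a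
  | .not φ, w, i => !(φ.eval w i)
  | .and φ ψ, w, i => φ.eval w i && ψ.eval w i
  | .prev φ, w, i => ((List.range i).filter (fun j => 0 < j)).any (fun j => φ.eval w j)
  | .hist φ, w, i => ((List.range (i + 1)).filter (fun j => 0 < j)).all (fun j => φ.eval w j)
  | .cmp t op k, w, i => op.holds (t.eval w i) k
def CTerm.eval {α : Type} [DecidableEq α] : CTerm α → List α → ℕ → ℤ
  | .const c, _, _ => c
  | .cnt φ, w, i =>
      ((((List.range (i + 1)).filter (fun j => 0 < j)).countP (fun j => φ.eval w j) : ℕ) : ℤ)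
  | .add t u, w, i => t.eval w i + u.eval w i
  | .smul a t, w, i => a * t.eval w i
end

def CForm.lang {α : Type} [DecidableEq α] (φ : CForm α) : Set (List α) :=
  {w | φ.eval w w.length = true}

mutual
def CForm.depth {α : Type} : CForm α → ℕ
  | .sym _ => 0
  | .not φ => φ.depth
  | .and φ ψ => max φ.depth ψ.depth
  | .prev φ => φ.depth + 1
  | .hist φ => φ.depth + 1
  | .cmp t _ _ => t.depth
def CTerm.depth {α : Type} : CTerm α → ℕ
  | .const _ => 0
  | .cnt φ => φ.depth + 1
  | .add t u => max t.depth u.depth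
  | .smul _ t => t.depth
end

def trueF {α : Type} : CForm α := .cmp (.const 0) .eq 0

def conjList {α : Type} (l : List (CForm α)) : CForm α := l.foldr .and trueF


/-- Number of bits of an integer constant (constants are encoded in binary). -/
def zsize (z : ℤ) : ℕ := Nat.log 2 z.natAbs + 1

mutual
/-- Size of a formula, with constants counted in binary. -/
def CForm.size {α : Type} : CForm α → ℕ
  | .sym _ => 1
  | .not φ => φ.size + 1
  | .and φ ψ => φ.size + ψ.size + 1
  | .prev φ => φ.size + 1
  | .hist φ => φ.size + 1
  | .cmp t _ k => t.size + zsize k + 1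
def CTerm.size {α : Type} : CTerm α → ℕ
  | .const c => zsize c + 1
  | .cnt φ => φ.size + 1
  | .add t u => t.size + u.size + 1
  | .smul a t => zsize a + t.size + 1
end

mutual
/-- Precision: number of bits of the largest constant occurring. -/
def CForm.prec {α : Type} : CForm α → ℕ
  | .sym _ => 0
  | .not φ => φ.prec
  | .and φ ψ => max φ.prec ψ.prec
  | .prev φ => φ.prec
  | .hist φ => φ.prec
  | .cmp t _ k => max t.prec (zsize k)
def CTerm.prec {α : Type} : CTerm α → ℕ
  | .const c => zsize c
  | .cnt φ => φ.prec
  | .add t u => max t.prec u.prec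
  | .smul a t => max (zsize a) t.prec
end

/-- Number of summands of a term. -/
def CTerm.summands {α : Type} : CTerm α → ℕ
  | .const _ => 1
  | .cnt _ => 1
  | .add t u => t.summands + u.summands
  | .smul _ t => t.summands

mutual
/-- Girth: the maximum number of summands occurring in any sum. -/
def CForm.girth {α : Type} : CForm α → ℕ
  | .sym _ => 0
  | .not φ => φ.girth
  | .and φ ψ => max φ.girth ψ.girth
  | .prev φ => φ.girth
  | .hist φ => φ.girth
  | .cmp t _ _ => max t.girthIn t.summands
def CTerm.girthIn {α : Type} : CTerm α → ℕ
  | .const _ => 0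
  | .cnt φ => φ.girth
  | .add t u => max t.girthIn u.girthIn
  | .smul _ t => t.girthIn
end

mutual
/-- The positive fragment C-RASP₊: no temporal operators, and all coefficients and
constants are natural numbers. -/
def CForm.Positive {α : Type} : CForm α → Prop
  | .sym _ => True
  | .not φ => φ.Positive
  | .and φ ψ => φ.Positive ∧ ψ.Positive
  | .prev _ => False
  | .hist _ => False
  | .cmp t _ k => t.Positive ∧ 0 ≤ k
def CTerm.Positive {α : Type} : CTerm α → Prop
  | .const c => 0 ≤ c
  | .cnt φ => φ.Positive
  | .add t u => t.Positive ∧ u.Positive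
  | .smul a t => 0 ≤ a ∧ t.Positive
end

/-- Formulas of the unary past temporal logic TL[◆]. -/
inductive TForm (α : Type) : Type
  | sym : α → TForm α
  | not : TForm α → TForm α
  | and : TForm α → TForm α → TForm α
  | prev : TForm α → TForm α
  | hist : TForm α → TForm α

def TForm.eval {α : Type} [DecidableEq α] : TForm α → List α → ℕ → Bool
  | .sym a, w, i => w[i - 1]? == some a
  | .not φ, w, i => !(φ.eval w i)
  | .and φ ψ, w, i => φ.eval w i && ψ.eval w i
  | .prev φ, w, i => ((List.range i).filter (fun j => 0 < j)).any (fun j => φ.eval w j)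
  | .hist φ, w, i => ((List.range (i + 1)).filter (fun j => 0 < j)).all (fun j => φ.eval w j)

def TForm.lang {α : Type} [DecidableEq α] (φ : TForm α) : Set (List α) :=
  {w | φ.eval w w.length = true}

def TForm.size {α : Type} : TForm α → ℕ
  | .sym _ => 1
  | .not φ => φ.size + 1
  | .and φ ψ => φ.size + ψ.size + 1
  | .prev φ => φ.size + 1
  | .hist φ => φ.size + 1

/-- The program `Pₙ := (#[Q_a] = n)` over the single-letter alphabet, with n in binary. -/
def Pn (n : ℕ) : CForm Unit := .cmp (.cnt (.sym ())) .eq (n : ℤ)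

/-!
Call position `q + 1` of `w` critical for a comparison `t ∼ k` of the program if reading it
increases `t` while `t ≤ k`. Terms of a positive program are monotone in the position, and every
comparison has the same truth value at all values above `k`; hence deleting a position that is
critical for no comparison only shifts the later values of each term by a constant, without changing
any comparison that the shift could affect. Along the positions critical for `t ∼ k` the value of
`t` strictly increases inside `[0, k]`, so a shortest word of the language has at most
`1 + ∑ (k + 1) ≤ 2 ^ (|P| + 1)` letters.
-/

def countUpTo (f : ℕ → Bool) (i : ℕ) : ℕ :=
  ((List.range (i + 1)).filter (fun j => 0 < j)).countP f

section countUpTo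

variable {f g : ℕ → Bool}

lemma countUpTo_succ (f : ℕ → Bool) (i : ℕ) :
    countUpTo f (i + 1) = countUpTo f i + if f (i + 1) then 1 else 0 := by
  rw [countUpTo, List.range_succ, List.filter_append, List.countP_append]
  simp [countUpTo, List.countP_cons]

lemma countUpTo_mono (f : ℕ → Bool) : Monotone (countUpTo f) := fun _ _ h =>
  ((List.range_sublist.2 (by omega)).filter _).countP_le

lemma countUpTo_congr {i : ℕ} (h : ∀ j, 1 ≤ j → j ≤ i → f j = g j) :
    countUpTo f i = countUpTo g i := by
  induction i with
  | zero => rfl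
  | succ i ih =>
    rw [countUpTo_succ, countUpTo_succ, ih fun j h1 h2 => h j h1 (by omega),
      h (i + 1) (by omega) le_rfl]

lemma countUpTo_true (i : ℕ) : countUpTo (fun _ => true) i = i := by
  induction i with
  | zero => rfl
  | succ i ih => simp [countUpTo_succ, ih]

/-- `g` is `f` with position `q + 1` deleted. -/
lemma countUpTo_add_of_delete {q : ℕ} (hlt : ∀ j, 1 ≤ j → j ≤ q → g j = f j)
    (hgt : ∀ j, q < j → g j = f (j + 1)) {j : ℕ} (hj : q ≤ j) :
    countUpTo g j + countUpTo f (q + 1) = countUpTo f (j + 1) + countUpTo f q := by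
  induction j, hj using Nat.le_induction with
  | base => rw [countUpTo_congr hlt]; ring
  | succ j hj ih =>
    rw [countUpTo_succ g, countUpTo_succ f (j + 1), hgt (j + 1) (by omega)]
    omega

end countUpTo

lemma List.take_eq_take_of_le {α : Type*} {w w' : List α} {i j : ℕ} (h : w.take j = w'.take j)
    (hij : i ≤ j) : w.take i = w'.take i := by
  rw [← Nat.min_eq_left hij, ← List.take_take, h, List.take_take]

section Eval

variable {α : Type} [DecidableEq α]

lemma CTerm.eval_cnt (φ : CForm α) (w : List α) (i : ℕ) :
    (CTerm.cnt φ).eval w i = countUpTo (fun j => φ.eval w j) i := by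
  simp [CTerm.eval, countUpTo]

theorem CTerm.eval_nonneg (w : List α) (i : ℕ) :
    ∀ t : CTerm α, t.Positive → 0 ≤ t.eval w i
  | .const _, h => h
  | .cnt φ, _ => by rw [CTerm.eval_cnt]; positivity
  | .add t u, h => add_nonneg (t.eval_nonneg w i h.1) (u.eval_nonneg w i h.2)
  | .smul _ t, h => mul_nonneg h.1 (t.eval_nonneg w i h.2)

theorem CTerm.monotone_eval (w : List α) : ∀ t : CTerm α, t.Positive → Monotone (t.eval w)
  | .const _, _ => monotone_const
  | .cnt φ, _ => fun i i' h => by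
    simp only [CTerm.eval_cnt]
    exact_mod_cast countUpTo_mono _ h
  | .add t u, h => (t.monotone_eval w h.1).add (u.monotone_eval w h.2)
  | .smul a t, h => (t.monotone_eval w h.2).const_mul h.1

mutual

theorem CForm.eval_congr_take {w w' : List α} :
    ∀ (φ : CForm α) {j : ℕ}, 1 ≤ j → w.take j = w'.take j → φ.eval w j = φ.eval w' j
  | .sym a, j, hj, h => by
    have hw : ∀ v : List α, v[j - 1]? = (v.take j)[j - 1]? := fun v => by
      rw [List.getElem?_take, if_pos (by omega)]
    simp only [CForm.eval, hw w, hw w', h]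
  | .not φ, j, hj, h => by simp only [CForm.eval, φ.eval_congr_take hj h]
  | .and φ ψ, j, hj, h => by
    simp only [CForm.eval, φ.eval_congr_take hj h, ψ.eval_congr_take hj h]
  | .prev φ, j, _, h => by
    simp only [CForm.eval]
    rw [Bool.eq_iff_iff]
    simp only [List.any_eq_true, List.mem_filter, List.mem_range, decide_eq_true_eq]
    refine exists_congr fun i => and_congr_right fun hi => ?_
    rw [φ.eval_congr_take hi.2 (List.take_eq_take_of_le h hi.1.le)]
  | .hist φ, j, _, h => by
    simp only [CForm.eval]
    rw [Bool.eq_iff_iff]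
    simp only [List.all_eq_true, List.mem_filter, List.mem_range, decide_eq_true_eq]
    refine forall_congr' fun i => imp_congr_right fun hi => ?_
    rw [φ.eval_congr_take hi.2 (List.take_eq_take_of_le h (by omega))]
  | .cmp t op k, j, hj, h => by simp only [CForm.eval, t.eval_congr_take h]

theorem CTerm.eval_congr_take {w w' : List α} :
    ∀ (t : CTerm α) {j : ℕ}, w.take j = w'.take j → t.eval w j = t.eval w' j
  | .const _, _, _ => rfl
  | .cnt φ, j, h => by
    simp only [CTerm.eval_cnt]
    exact congrArg _ (countUpTo_congr fun i hi hij =>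
      φ.eval_congr_take hi (List.take_eq_take_of_le h hij))
  | .add t u, j, h => by simp only [CTerm.eval, t.eval_congr_take h, u.eval_congr_take h]
  | .smul a t, j, h => by simp only [CTerm.eval, t.eval_congr_take h]

end

end Eval

mutual

def CForm.comparisons {α : Type} : CForm α → List (CTerm α × ℤ)
  | .sym _ => []
  | .not φ => φ.comparisons
  | .and φ ψ => φ.comparisons ++ ψ.comparisons
  | .prev φ => φ.comparisons
  | .hist φ => φ.comparisons
  | .cmp t _ k => (t, k) :: t.comparisons

def CTerm.comparisons {α : Type} : CTerm α → List (CTerm α × ℤ)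
  | .const _ => []
  | .cnt φ => φ.comparisons
  | .add t u => t.comparisons ++ u.comparisons
  | .smul _ t => t.comparisons

end

mutual

theorem CForm.Positive.comparisons {α : Type} :
    ∀ {φ : CForm α}, φ.Positive → ∀ g ∈ φ.comparisons, g.1.Positive
  | .sym _, _, _, hg => by simp [CForm.comparisons] at hg
  | .not φ, h, g, hg => CForm.Positive.comparisons (φ := φ) h g hg
  | .and _ _, h, g, hg => (List.mem_append.1 hg).elim (h.1.comparisons g) (h.2.comparisons g)
  | .prev _, h, _, _ => h.elim
  | .hist _, h, _, _ => h.elim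
  | .cmp _ _ _, h, g, hg => by
    rcases List.mem_cons.1 hg with rfl | hg
    exacts [h.1, h.1.comparisons g hg]

theorem CTerm.Positive.comparisons {α : Type} :
    ∀ {t : CTerm α}, t.Positive → ∀ g ∈ t.comparisons, g.1.Positive
  | .const _, _, _, hg => by simp [CTerm.comparisons] at hg
  | .cnt φ, h, g, hg => CForm.Positive.comparisons (φ := φ) h g hg
  | .add _ _, h, g, hg => (List.mem_append.1 hg).elim (h.1.comparisons g) (h.2.comparisons g)
  | .smul _ _, h, g, hg => h.2.comparisons g hg

end

lemma CmpOp.holds_eq_of_lt (op : CmpOp) {x y k : ℤ} (hx : k < x) (hy : k < y) :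
    op.holds x k = op.holds y k := by
  cases op <;> simp only [CmpOp.holds] <;> grind

section Deletion

variable {α : Type} [DecidableEq α]

def CTerm.CriticalAt (t : CTerm α) (k : ℤ) (w : List α) (q : ℕ) : Prop :=
  t.eval w q ≤ k ∧ t.eval w q < t.eval w (q + 1)

mutual

theorem CForm.eval_eraseIdx {w : List α} {q : ℕ} : ∀ φ : CForm α, φ.Positive →
    (∀ g ∈ φ.comparisons, ¬ g.1.CriticalAt g.2 w q) →
    ∀ {j : ℕ}, q < j → φ.eval (w.eraseIdx q) j = φ.eval w (j + 1)
  | .sym a, _, _, j, hj => by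
    simp only [CForm.eval, List.getElem?_eraseIdx_of_ge (show q ≤ j - 1 by omega),
      Nat.sub_add_cancel (show 1 ≤ j by omega), Nat.add_sub_cancel]
  | .not φ, hpos, hfree, j, hj => by simp only [CForm.eval, φ.eval_eraseIdx hpos hfree hj]
  | .and φ ψ, hpos, hfree, j, hj => by
    simp only [CForm.eval,
      φ.eval_eraseIdx hpos.1 (fun g h => hfree g (List.mem_append_left _ h)) hj,
      ψ.eval_eraseIdx hpos.2 (fun g h => hfree g (List.mem_append_right _ h)) hj]
  | .prev _, hpos, _, _, _ => hpos.elim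
  | .hist _, hpos, _, _, _ => hpos.elim
  | .cmp t op k, hpos, hfree, j, hj => by
    have hshift := t.eval_eraseIdx hpos.1 (fun g h => hfree g (List.mem_cons_of_mem _ h)) hj
    have hcrit := hfree (t, k) List.mem_cons_self
    have hstep := t.monotone_eval w hpos.1 (Nat.le_add_right q 1)
    have hlater := t.monotone_eval w hpos.1 (show q + 1 ≤ j + 1 by omega)
    simp only [CForm.eval]
    by_cases hk : t.eval w q ≤ k
    · have hflat : t.eval w (q + 1) = t.eval w q :=
        le_antisymm (not_lt.1 fun h => hcrit ⟨hk, h⟩) hstep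
      rw [show t.eval (w.eraseIdx q) j = t.eval w (j + 1) by omega]
    · exact op.holds_eq_of_lt (by omega) (by omega)

theorem CTerm.eval_eraseIdx {w : List α} {q : ℕ} : ∀ t : CTerm α, t.Positive →
    (∀ g ∈ t.comparisons, ¬ g.1.CriticalAt g.2 w q) →
    ∀ {j : ℕ}, q < j →
      t.eval (w.eraseIdx q) j + t.eval w (q + 1) = t.eval w (j + 1) + t.eval w q
  | .const _, _, _, _, _ => rfl
  | .cnt φ, hpos, hfree, j, hj => by
    simp only [CTerm.eval_cnt]
    exact_mod_cast countUpTo_add_of_delete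
      (fun i hi hiq => φ.eval_congr_take hi (List.take_eraseIdx_eq_take_of_le w i q hiq))
      (fun i hi => φ.eval_eraseIdx hpos hfree hi) hj.le
  | .add t u, hpos, hfree, j, hj => by
    have ht := t.eval_eraseIdx hpos.1 (fun g h => hfree g (List.mem_append_left _ h)) hj
    have hu := u.eval_eraseIdx hpos.2 (fun g h => hfree g (List.mem_append_right _ h)) hj
    simp only [CTerm.eval]
    linear_combination ht + hu
  | .smul a t, hpos, hfree, j, hj => by
    have ht := t.eval_eraseIdx hpos.2 hfree hj
    simp only [CTerm.eval]
    linear_combination a * ht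

end

end Deletion

section SmallModel

variable {α : Type} [DecidableEq α]

instance (t : CTerm α) (k : ℤ) (w : List α) : DecidablePred (t.CriticalAt k w) :=
  fun _ => inferInstanceAs (Decidable (_ ∧ _))

lemma CTerm.card_filter_criticalAt_le {t : CTerm α} (ht : t.Positive) (k : ℤ) (w : List α)
    (S : Finset ℕ) : (S.filter (t.CriticalAt k w)).card ≤ k.toNat + 1 := by
  have hmono := t.monotone_eval w ht
  have hstrict : StrictMonoOn (t.eval w) (S.filter (t.CriticalAt k w) : Set ℕ) :=
    fun p hp q _ hpq => (Finset.mem_filter.1 hp).2.2.trans_le (hmono hpq)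
  calc (S.filter (t.CriticalAt k w)).card
      ≤ (Finset.Icc 0 k).card := Finset.card_le_card_of_injOn (t.eval w)
        (fun q hq => Finset.mem_Icc.2 ⟨t.eval_nonneg w q ht, (Finset.mem_filter.1 hq).2.1⟩)
        hstrict.injOn
    _ ≤ k.toNat + 1 := by rw [Int.card_Icc]; omega

lemma card_filter_exists_criticalAt_le (w : List α) (S : Finset ℕ) :
    ∀ L : List (CTerm α × ℤ), (∀ g ∈ L, g.1.Positive) →
      (S.filter fun q => ∃ g ∈ L, g.1.CriticalAt g.2 w q).card ≤
        (L.map fun g => g.2.toNat + 1).sum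
  | [], _ => by simp
  | g :: L, hL => by
    have hsplit : (S.filter fun q => ∃ g' ∈ g :: L, g'.1.CriticalAt g'.2 w q) =
        S.filter (g.1.CriticalAt g.2 w) ∪
          S.filter fun q => ∃ g' ∈ L, g'.1.CriticalAt g'.2 w q := by
      rw [← Finset.filter_or]
      exact Finset.filter_congr fun q _ => by simp
    rw [hsplit, List.map_cons, List.sum_cons]
    exact (Finset.card_union_le _ _).trans (add_le_add
      (CTerm.card_filter_criticalAt_le (hL g List.mem_cons_self) _ w S)
      (card_filter_exists_criticalAt_le w S L fun g' h => hL g' (List.mem_cons_of_mem g h)))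

lemma CForm.exists_shorter_mem_lang {φ : CForm α} (hφ : φ.Positive) {w : List α}
    (hw : w ∈ φ.lang) (hlen : 1 + (φ.comparisons.map fun g => g.2.toNat + 1).sum < w.length) :
    ∃ w' ∈ φ.lang, w'.length < w.length := by
  obtain ⟨q, hq, hfree⟩ : ∃ q ∈ Finset.range (w.length - 1),
      ¬ ∃ g ∈ φ.comparisons, g.1.CriticalAt g.2 w q := by
    by_contra! hall
    have hcard := card_filter_exists_criticalAt_le w (Finset.range (w.length - 1)) φ.comparisons
      hφ.comparisons
    rw [Finset.filter_true_of_mem hall, Finset.card_range] at hcard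
    omega
  rw [Finset.mem_range] at hq
  have hlen' : (w.eraseIdx q).length = w.length - 1 := List.length_eraseIdx_of_lt (by omega)
  refine ⟨w.eraseIdx q, ?_, by omega⟩
  have heval := φ.eval_eraseIdx hφ (fun g hg hc => hfree ⟨g, hg, hc⟩) hq
  rw [Nat.sub_add_cancel (by omega)] at heval
  rw [CForm.lang, Set.mem_ofPred_eq, hlen', heval]
  exact hw

theorem CForm.exists_mem_lang_length_le {φ : CForm α} (hφ : φ.Positive)
    (hne : φ.lang.Nonempty) :
    ∃ w ∈ φ.lang, w.length ≤ 1 + (φ.comparisons.map fun g => g.2.toNat + 1).sum := by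
  obtain ⟨w, hw⟩ := hne
  induction hn : w.length using Nat.strong_induction_on generalizing w with
  | _ n ih =>
    by_cases hlen : w.length ≤ 1 + (φ.comparisons.map fun g => g.2.toNat + 1).sum
    · exact ⟨w, hw, hlen⟩
    · obtain ⟨w', hw', hlt⟩ := CForm.exists_shorter_mem_lang hφ hw (by omega)
      exact ih _ (hn ▸ hlt) w' hw' rfl

end SmallModel

lemma Int.toNat_add_one_le_two_pow_zsize (k : ℤ) : k.toNat + 1 ≤ 2 ^ zsize k := by
  have := Nat.lt_pow_succ_log_self one_lt_two k.natAbs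
  rw [zsize]
  omega

lemma two_pow_add_two_pow_le {a b c : ℕ} (ha : a ≤ c) (hb : b ≤ c) :
    2 ^ a + 2 ^ b ≤ 2 ^ (c + 1) :=
  calc 2 ^ a + 2 ^ b ≤ 2 ^ c + 2 ^ c := add_le_add (Nat.pow_le_pow_right two_pos ha)
        (Nat.pow_le_pow_right two_pos hb)
    _ = 2 ^ (c + 1) := by ring

mutual

theorem CForm.sum_comparisons_le {α : Type} :
    ∀ φ : CForm α, (φ.comparisons.map fun g => g.2.toNat + 1).sum ≤ 2 ^ φ.size
  | .sym _ => Nat.zero_le _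
  | .not φ => φ.sum_comparisons_le.trans (Nat.pow_le_pow_right two_pos (Nat.le_succ _))
  | .and φ ψ => by
    rw [CForm.comparisons, List.map_append, List.sum_append, CForm.size]
    exact (add_le_add φ.sum_comparisons_le ψ.sum_comparisons_le).trans
      (two_pow_add_two_pow_le (by omega) (by omega))
  | .prev φ => φ.sum_comparisons_le.trans (Nat.pow_le_pow_right two_pos (Nat.le_succ _))
  | .hist φ => φ.sum_comparisons_le.trans (Nat.pow_le_pow_right two_pos (Nat.le_succ _))
  | .cmp t _ k => by
    rw [CForm.comparisons, List.map_cons, List.sum_cons, CForm.size]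
    exact (add_le_add k.toNat_add_one_le_two_pow_zsize t.sum_comparisons_le).trans
      (two_pow_add_two_pow_le (by omega) (by omega))

theorem CTerm.sum_comparisons_le {α : Type} :
    ∀ t : CTerm α, (t.comparisons.map fun g => g.2.toNat + 1).sum ≤ 2 ^ t.size
  | .const _ => Nat.zero_le _
  | .cnt φ => φ.sum_comparisons_le.trans (Nat.pow_le_pow_right two_pos (Nat.le_succ _))
  | .add t u => by
    rw [CTerm.comparisons, List.map_append, List.sum_append, CTerm.size]
    exact (add_le_add t.sum_comparisons_le u.sum_comparisons_le).trans
      (two_pow_add_two_pow_le (by omega) (by omega))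
  | .smul a t => t.sum_comparisons_le.trans
      (Nat.pow_le_pow_right two_pos (by simp only [CTerm.size]; omega))

end

lemma lang_Pn (n : ℕ) : (Pn n).lang = {List.replicate n ()} := by
  ext w
  have hcount : countUpTo (fun j => w[j - 1]? == some ()) w.length = w.length := by
    refine (countUpTo_congr fun j hj hjw => ?_).trans (countUpTo_true _)
    simp [List.getElem?_eq_getElem (show j - 1 < w.length by omega)]
  simp [CForm.lang, Pn, CForm.eval, CmpOp.holds, CTerm.eval_cnt, hcount, List.eq_replicate_iff]

lemma size_Pn (n : ℕ) : (Pn n).size = Nat.log 2 n + 4 := by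
  simp only [Pn, CForm.size, CTerm.size, zsize, Int.natAbs_natCast]
  ring

/-- Exponential small-model bound for positive C-RASP, and its tightness: every nonempty
positive C-RASP language has a member of length at most exponential in the program size,
and `Pₙ` (of size O(log n)) defines the singleton `{aⁿ}`, whose unique string has length
exponential in `|Pₙ|`. -/
theorem crasp_pos_small_model :
    (∃ c : ℕ, ∀ (α : Type) [DecidableEq α] (φ : CForm α), φ.Positive →
      (CForm.lang φ).Nonempty →
      ∃ w ∈ CForm.lang φ, w.length ≤ 2 ^ (c * (φ.size + 1) ^ c)) ∧
    (∃ c : ℕ, 0 < c ∧ ∀ n : ℕ, 1 ≤ n →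
      CForm.lang (Pn n) = {List.replicate n ()} ∧
      (Pn n).size ≤ c * (Nat.log 2 n + 1)) := by
  refine ⟨⟨1, fun α _ φ hφ hne => ?_⟩,
    ⟨4, by norm_num, fun n _ => ⟨lang_Pn n, by rw [size_Pn]; omega⟩⟩⟩
  obtain ⟨w, hw, hlen⟩ := φ.exists_mem_lang_length_le hφ hne
  refine ⟨w, hw, hlen.trans ?_⟩
  have hbudget := φ.sum_comparisons_le
  have hpos : 1 ≤ 2 ^ φ.size := Nat.one_le_two_pow
  rw [one_mul, pow_one, pow_succ]
  omega
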